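/- Let D ∈ {−1,0,1}^{|ℰ|×m} be the incidence matrix of a connected graph, d ≥ 1, D̃ = D ⊗ I_{d²}, and fix a* ∈ ℝ^{md²} and S ⊆ [|ℰ|d²]. Define the cone C_S := {h ∈ ℝ^{md²} : ‖(D̃h)_{S^c}‖₁ ≤ ‖h‖₂ + 3‖(D̃h)_S‖₁ + 4‖(D̃a*)_{S^c}‖₁}. Then for every h ∈ C_S with ‖h‖₂ = 1, one has ‖D̃h‖₁ ≤ 4√|S|/κ_S + 4‖(D̃a*)_{S^c}‖₁ + 1, where κ_S is the compatibility factor of D̃ for S (with κ_∅ := 1). In other words, D̃(C_S ∩ 𝕊^{md²−1}) is contained in the ℓ1 ball of radius 4√|S|/κ_S + 4‖(D̃a*)_{S^c}‖₁ + 1 in ℝ^{|ℰ|d²}. -/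
import Mathlib


open Matrix Finset
open scoped Kronecker

/-- `D` is the incidence matrix of (an orientation of) an undirected graph:
each row has exactly one `+1` entry and one `-1` entry, and is `0` elsewhere. -/
def IsIncidenceMatrix {E m : ℕ} (D : Matrix (Fin E) (Fin m) ℝ) : Prop :=
  ∀ j : Fin E, ∃ a b : Fin m, a ≠ b ∧ D j a = 1 ∧ D j b = -1 ∧
    ∀ i : Fin m, i ≠ a → i ≠ b → D j i = 0

/-- The undirected simple graph underlying an incidence matrix. -/
def incidenceGraph {E m : ℕ} (D : Matrix (Fin E) (Fin m) ℝ) : SimpleGraph (Fin m) :=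
  SimpleGraph.fromRel (fun a b => ∃ j : Fin E, D j a = 1 ∧ D j b = -1)

/-- The compatibility factor of `Dt` for an index set `S`:
`κ_S = inf { √|S| ‖θ‖₂ / ‖(Dt θ)_S‖₁ }` over `θ` with `(Dt θ)_S ≠ 0`, and `κ_∅ = 1`. -/
noncomputable def compatFactor {E m n : ℕ}
    (Dt : Matrix (Fin E × Fin n) (Fin m × Fin n) ℝ)
    (S : Finset (Fin E × Fin n)) : ℝ :=
  if S = ∅ then 1
  else sInf {r : ℝ | ∃ θ : Fin m × Fin n → ℝ,
    (∑ p ∈ S, |(Dt *ᵥ θ) p|) ≠ 0 ∧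
    r = Real.sqrt S.card * Real.sqrt (∑ q, θ q ^ 2) / (∑ p ∈ S, |(Dt *ᵥ θ) p|)}

lemma compatFactor_nonneg {E m n : ℕ}
    (Dt : Matrix (Fin E × Fin n) (Fin m × Fin n) ℝ)
    (S : Finset (Fin E × Fin n)) : 0 ≤ compatFactor Dt S := by
  unfold compatFactor
  split
  · norm_num
  · apply Real.sInf_nonneg
    rintro r ⟨θ, hT, rfl⟩
    have hT' : 0 < ∑ p ∈ S, |(Dt *ᵥ θ) p| :=
      lt_of_le_of_ne (Finset.sum_nonneg fun p _ => abs_nonneg _) (Ne.symm hT)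
    positivity

lemma sum_abs_mulVec_le {E m n : ℕ}
    (Dt : Matrix (Fin E × Fin n) (Fin m × Fin n) ℝ)
    (S : Finset (Fin E × Fin n)) (θ : Fin m × Fin n → ℝ) :
    (∑ p ∈ S, |(Dt *ᵥ θ) p|)
      ≤ (∑ p ∈ S, ∑ q, |Dt p q|) * Real.sqrt (∑ q, θ q ^ 2) := by
  rw [Finset.sum_mul]
  apply Finset.sum_le_sum
  intro p _
  have h1 : |(Dt *ᵥ θ) p| ≤ ∑ q, |Dt p q| * |θ q| := by
    rw [Matrix.mulVec, dotProduct]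
    calc |∑ q, Dt p q * θ q| ≤ ∑ q, |Dt p q * θ q| := Finset.abs_sum_le_sum_abs _ _
      _ = ∑ q, |Dt p q| * |θ q| := by simp [abs_mul]
  refine h1.trans ?_
  rw [Finset.sum_mul]
  apply Finset.sum_le_sum
  intro q _
  apply mul_le_mul_of_nonneg_left _ (abs_nonneg _)
  have : θ q ^ 2 ≤ ∑ r, θ r ^ 2 :=
    Finset.single_le_sum (fun r _ => sq_nonneg (θ r)) (Finset.mem_univ q)
  calc |θ q| = Real.sqrt (θ q ^ 2) := (Real.sqrt_sq_eq_abs _).symm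
    _ ≤ Real.sqrt (∑ r, θ r ^ 2) := Real.sqrt_le_sqrt this

/-- Set inclusion for the cone `C_S`.
Every unit-norm `h` in the cone
`C_S = {h : ‖(D̃h)_{Sᶜ}‖₁ ≤ ‖h‖₂ + 3‖(D̃h)_S‖₁ + 4‖(D̃a*)_{Sᶜ}‖₁}`
satisfies `‖D̃h‖₁ ≤ 4√|S|/κ_S + 4‖(D̃a*)_{Sᶜ}‖₁ + 1`. -/
theorem cone_ell_one_ball_inclusion {E m : ℕ} (d : ℕ) (hd : 1 ≤ d)
    (D : Matrix (Fin E) (Fin m) ℝ) (hD : IsIncidenceMatrix D)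
    (hconn : (incidenceGraph D).Connected)
    (Dt : Matrix (Fin E × Fin (d ^ 2)) (Fin m × Fin (d ^ 2)) ℝ)
    (hDt : Dt = D ⊗ₖ (1 : Matrix (Fin (d ^ 2)) (Fin (d ^ 2)) ℝ))
    (astar : Fin m × Fin (d ^ 2) → ℝ)
    (S : Finset (Fin E × Fin (d ^ 2)))
    (h : Fin m × Fin (d ^ 2) → ℝ)
    (hcone : ∑ p ∈ Sᶜ, |(Dt *ᵥ h) p|
        ≤ Real.sqrt (∑ q, h q ^ 2) + 3 * ∑ p ∈ S, |(Dt *ᵥ h) p|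
          + 4 * ∑ p ∈ Sᶜ, |(Dt *ᵥ astar) p|)
    (hnorm : ∑ q, h q ^ 2 = 1) :
    (∑ p, |(Dt *ᵥ h) p|)
      ≤ 4 * Real.sqrt S.card / compatFactor Dt S
        + 4 * ∑ p ∈ Sᶜ, |(Dt *ᵥ astar) p| + 1 := by
  have hsqrt1 : Real.sqrt (∑ q, h q ^ 2) = 1 := by rw [hnorm, Real.sqrt_one]
  have hAnn : 0 ≤ ∑ p ∈ S, |(Dt *ᵥ h) p| := Finset.sum_nonneg fun p _ => abs_nonneg _
  have hann : 0 ≤ ∑ p ∈ Sᶜ, |(Dt *ᵥ astar) p| := Finset.sum_nonneg fun p _ => abs_nonneg _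
  have hsplit : (∑ p, |(Dt *ᵥ h) p|)
      = (∑ p ∈ S, |(Dt *ᵥ h) p|) + ∑ p ∈ Sᶜ, |(Dt *ᵥ h) p| :=
    (Finset.sum_add_sum_compl S _).symm
  have hkey : (∑ p ∈ S, |(Dt *ᵥ h) p|) ≤ Real.sqrt S.card / compatFactor Dt S := by
    rcases eq_or_lt_of_le hAnn with h0 | hpos
    · rw [← h0]
      exact div_nonneg (Real.sqrt_nonneg _) (compatFactor_nonneg Dt S)
    · have hSne : S ≠ ∅ := by
        rintro rfl
        simp at hpos
      have hScard : 0 < Real.sqrt S.card := by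
        apply Real.sqrt_pos.mpr
        exact_mod_cast Finset.card_pos.mpr (Finset.nonempty_iff_ne_empty.mpr hSne)
      set K := ∑ p ∈ S, ∑ q, |Dt p q| with hKdef
      have hKpos : 0 < K := by
        have := sum_abs_mulVec_le Dt S h
        rw [hsqrt1, mul_one] at this
        linarith
      set T := {r : ℝ | ∃ θ : Fin m × Fin (d ^ 2) → ℝ,
        (∑ p ∈ S, |(Dt *ᵥ θ) p|) ≠ 0 ∧
        r = Real.sqrt S.card * Real.sqrt (∑ q, θ q ^ 2) / (∑ p ∈ S, |(Dt *ᵥ θ) p|)} with hTdef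
      have hmem : Real.sqrt S.card / (∑ p ∈ S, |(Dt *ᵥ h) p|) ∈ T := by
        refine ⟨h, hpos.ne', ?_⟩
        rw [hsqrt1, mul_one]
      have hbdd : BddBelow T := ⟨0, by
        rintro r ⟨θ, hT0, rfl⟩
        have hT' : 0 < ∑ p ∈ S, |(Dt *ᵥ θ) p| :=
          lt_of_le_of_ne (Finset.sum_nonneg fun p _ => abs_nonneg _) (Ne.symm hT0)
        positivity⟩
      have hκdef : compatFactor Dt S = sInf T := by
        unfold compatFactor
        rw [if_neg hSne]
      have hκle : compatFactor Dt S ≤ Real.sqrt S.card / (∑ p ∈ S, |(Dt *ᵥ h) p|) := by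
        rw [hκdef]; exact csInf_le hbdd hmem
      have hκge : Real.sqrt S.card / K ≤ compatFactor Dt S := by
        rw [hκdef]
        apply le_csInf ⟨_, hmem⟩
        rintro r ⟨θ, hT0, rfl⟩
        have hT' : 0 < ∑ p ∈ S, |(Dt *ᵥ θ) p| :=
          lt_of_le_of_ne (Finset.sum_nonneg fun p _ => abs_nonneg _) (Ne.symm hT0)
        have hb := sum_abs_mulVec_le Dt S θ
        rw [div_le_div_iff₀ hKpos hT']
        nlinarith [Real.sqrt_nonneg (∑ q, θ q ^ 2), hScard.le]
      have hκpos : 0 < compatFactor Dt S :=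
        lt_of_lt_of_le (div_pos hScard hKpos) hκge
      rw [le_div_iff₀ hκpos]
      have := (le_div_iff₀ hpos).mp hκle
      nlinarith
  rw [hsplit]
  rw [hsqrt1] at hcone
  have h4 : 4 * Real.sqrt S.card / compatFactor Dt S
      = 4 * (Real.sqrt S.card / compatFactor Dt S) := by
    rw [mul_div_assoc]
  rw [h4]
  linarith
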